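/- arXiv:1807.10727 — 5 statements merged into one kernel-verified Lean document; each statement's English description precedes it below -/
import Mathlib

section
/- Let G be a finite simple graph on a vertex set V of size n in which every vertex has at least one neighbor, and let ρ be chosen uniformly at random among bijections V → {1,…,n}. Then the expected number of distinct labels, i.e. E[|{ℓ_ρ(v) : v ∈ V}|], is at most 3n/4. -/
open Function SimpleGraph

/-- The closed neighborhood of `v` in `G`: `v` together with its neighbors. -/
def closedNbhd {V : Type*} (G : SimpleGraph V) (v : V) : Set V :=
  {u | u = v ∨ G.Adj v u}

/-- `N(N(v))`: the union of the closed neighborhoods of the vertices of the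
closed neighborhood of `v`. -/
def twoNbhd {V : Type*} (G : SimpleGraph V) (v : V) : Set V :=
  ⋃ u ∈ closedNbhd G v, closedNbhd G u

/-!
Every label `ℓ_ρ(v)` is the `ρ`-minimum `m(u)` (`nbhdMin`) of the closed neighbourhood `N(u)`
of some `u ∈ N(v)`, so it suffices to count the distinct values of `m`. Fix a neighbour `φ w`
of each vertex `w`. On average, `n/2` vertices `w` satisfy `ρ w < ρ (φ w)`. If instead
`w = m(x)` and `ρ (φ w) < ρ w`, then `φ w ∉ N(x)` and, in `N(x) ∪ {φ w}`, the vertex `φ w`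
comes first and `w` second, which has probability `1/((k+1)k)` for `k = |N(x)|`. Since
`w ≠ x` (as `φ x ∈ N(x)`), there are at most `k - 1` candidates for `w`, and
`(k-1)/(k(k+1)) ≤ 1/4`. Together: `n/2 + n/4 = 3n/4`.
-/

open Finset

section FirstTwo

variable {V β : Type*} [LinearOrder β]

lemma card_filter_perm_trans [DecidableEq V] [Fintype V] [Fintype β] (σ : Equiv.Perm V)
    (P : (V ≃ β) → Prop) [DecidablePred P] : #{ρ | P (σ.trans ρ)} = #{ρ | P ρ} :=
  card_equiv ⟨σ.trans, σ.symm.trans, fun ρ => by ext; simp, fun ρ => by ext; simp⟩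
    fun ρ => by simp

def IsFirstTwo (ρ : V ≃ β) (S : Finset V) (a b : V) : Prop :=
  ρ a < ρ b ∧ ∀ y ∈ S, y ≠ a → y ≠ b → ρ b < ρ y

lemma IsFirstTwo.unique {ρ : V ≃ β} {S : Finset V} {a b c d : V} (hab : IsFirstTwo ρ S a b)
    (hcd : IsFirstTwo ρ S c d) (ha : a ∈ S) (hb : b ∈ S) (hc : c ∈ S) (hd : d ∈ S) :
    a = c ∧ b = d := by
  have hlt_a : ∀ y ∈ S, y ≠ a → ρ a < ρ y := fun y hy hya => by
    rcases eq_or_ne y b with rfl | hyb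
    exacts [hab.1, hab.1.trans (hab.2 y hy hya hyb)]
  have hlt_c : ∀ y ∈ S, y ≠ c → ρ c < ρ y := fun y hy hyc => by
    rcases eq_or_ne y d with rfl | hyd
    exacts [hcd.1, hcd.1.trans (hcd.2 y hy hyc hyd)]
  have hac : a = c := by
    by_contra h
    exact (hlt_a c hc (Ne.symm h)).asymm (hlt_c a ha h)
  subst hac
  refine ⟨rfl, ?_⟩
  by_contra h
  exact (hab.2 d hd (hcd.1.ne' ∘ congrArg ρ) (Ne.symm h)).asymm
    (hcd.2 b hb (hab.1.ne' ∘ congrArg ρ) h)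

lemma exists_perm_bijOn_pair [DecidableEq V] {S : Finset V} {a b c d : V} (ha : a ∈ S)
    (hb : b ∈ S) (hc : c ∈ S) (hd : d ∈ S) (hab : a ≠ b) (hcd : c ≠ d) :
    ∃ σ : Equiv.Perm V, σ c = a ∧ σ d = b ∧ Set.BijOn σ S S := by
  set d' := Equiv.swap c a d
  have hd' : d' ∈ S := by
    simpa using (Equiv.swap_bijOn_self (s := (S : Set V)) (by simp [ha, hc])).mapsTo hd
  have had' : a ≠ d' := fun h => hcd (by simpa [d'] using congrArg (Equiv.swap c a) h)
  refine ⟨(Equiv.swap c a).trans (Equiv.swap d' b), ?_, ?_, ?_⟩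
  · simp [Equiv.swap_apply_of_ne_of_ne had' hab]
  · simp [d']
  · exact (Equiv.swap_bijOn_self (by simp [hd', hb])).comp
      (Equiv.swap_bijOn_self (by simp [ha, hc]))

instance [DecidableEq V] (ρ : V ≃ β) (S : Finset V) (a b : V) :
    Decidable (IsFirstTwo ρ S a b) := by
  unfold IsFirstTwo; infer_instance

lemma isFirstTwo_trans_iff {ρ : V ≃ β} {S : Finset V} {a b c d : V} {σ : Equiv.Perm V}
    (hc : σ c = a) (hd : σ d = b) (hσ : Set.BijOn σ S S) :
    IsFirstTwo (σ.trans ρ) S c d ↔ IsFirstTwo ρ S a b := by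
  have hS := hσ.forall (p := fun z => z ≠ a → z ≠ b → ρ b < ρ z)
  subst hc hd
  simp only [Finset.mem_coe, σ.injective.ne_iff] at hS
  simp only [IsFirstTwo, Equiv.trans_apply, hS]

lemma card_isFirstTwo_eq [DecidableEq V] [Fintype V] [Fintype β] {S : Finset V} {a b c d : V}
    (ha : a ∈ S) (hb : b ∈ S) (hc : c ∈ S) (hd : d ∈ S) (hab : a ≠ b) (hcd : c ≠ d) :
    #{ρ : V ≃ β | IsFirstTwo ρ S c d} = #{ρ : V ≃ β | IsFirstTwo ρ S a b} := by
  obtain ⟨σ, hσc, hσd, hσ⟩ := exists_perm_bijOn_pair ha hb hc hd hab hcd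
  rw [← card_filter_perm_trans σ]
  simp only [isFirstTwo_trans_iff hσc hσd hσ]

lemma card_mul_card_isFirstTwo_le [DecidableEq V] [Fintype V] [Fintype β] {S : Finset V}
    {a b : V} (ha : a ∈ S) (hb : b ∈ S) (hab : a ≠ b) :
    #S * (#S - 1) * #{ρ : V ≃ β | IsFirstTwo ρ S a b} ≤ Fintype.card (V ≃ β) := by
  have hdisj : (S.offDiag : Set (V × V)).PairwiseDisjoint
      fun p => ({ρ : V ≃ β | IsFirstTwo ρ S p.1 p.2} : Finset _) := by
    rintro ⟨c, d⟩ hcd ⟨c', d'⟩ hcd' hne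
    simp only [coe_offDiag, Set.mem_offDiag] at hcd hcd'
    refine disjoint_filter.2 fun ρ _ h h' => hne ?_
    obtain ⟨rfl, rfl⟩ := h.unique h' hcd.1 hcd.2.1 hcd'.1 hcd'.2.1
    rfl
  calc #S * (#S - 1) * #{ρ : V ≃ β | IsFirstTwo ρ S a b}
      = ∑ p ∈ S.offDiag, #{ρ : V ≃ β | IsFirstTwo ρ S p.1 p.2} := by
        rw [sum_congr rfl fun p hp => card_isFirstTwo_eq ha hb (mem_offDiag.1 hp).1
          (mem_offDiag.1 hp).2.1 hab (mem_offDiag.1 hp).2.2, sum_const, offDiag_card,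
          smul_eq_mul, Nat.mul_sub_one]
    _ = #(S.offDiag.biUnion fun p => {ρ : V ≃ β | IsFirstTwo ρ S p.1 p.2}) :=
        (card_biUnion hdisj).symm
    _ ≤ Fintype.card (V ≃ β) := card_le_univ _

lemma two_mul_card_filter_lt_le [DecidableEq V] [Fintype V] [Fintype β] {a b : V}
    (hab : a ≠ b) :
    2 * #{ρ : V ≃ β | ρ a < ρ b} ≤ Fintype.card (V ≃ β) := by
  have h := card_mul_card_isFirstTwo_le (β := β) (mem_insert_self a {b})
    (mem_insert_of_mem (mem_singleton_self b)) hab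
  simpa [IsFirstTwo, card_pair hab] using h

end FirstTwo

section Graph

variable {V β : Type*} [LinearOrder β] {G : SimpleGraph V}

noncomputable def closedNbhdFinset [Finite V] (G : SimpleGraph V) (v : V) : Finset V :=
  (Set.toFinite (closedNbhd G v)).toFinset

@[simp]
lemma mem_closedNbhdFinset [Finite V] {v u : V} :
    u ∈ closedNbhdFinset G v ↔ u ∈ closedNbhd G v :=
  Set.Finite.mem_toFinset _

lemma self_mem_closedNbhd (v : V) : v ∈ closedNbhd G v := Or.inl rfl

lemma closedNbhd_subset_twoNbhd {u v : V} (hu : u ∈ closedNbhd G v) :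
    closedNbhd G u ⊆ twoNbhd G v :=
  Set.subset_biUnion_of_mem (u := fun u => closedNbhd G u) hu

noncomputable def nbhdMin [Finite V] (G : SimpleGraph V) (ρ : V ≃ β) (v : V) : V :=
  ρ.symm (((closedNbhdFinset G v).image ρ).min'
    ⟨ρ v, mem_image_of_mem ρ (mem_closedNbhdFinset.2 (self_mem_closedNbhd v))⟩)

lemma apply_nbhdMin [Finite V] (ρ : V ≃ β) (v : V) :
    ρ (nbhdMin G ρ v) = ((closedNbhdFinset G v).image ρ).min'
      ⟨ρ v, mem_image_of_mem ρ (mem_closedNbhdFinset.2 (self_mem_closedNbhd v))⟩ :=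
  ρ.apply_symm_apply _

lemma nbhdMin_mem [Finite V] (ρ : V ≃ β) (v : V) : nbhdMin G ρ v ∈ closedNbhd G v := by
  obtain ⟨u, hu, hρu⟩ := mem_image.1 (min'_mem ((closedNbhdFinset G v).image ρ) _)
  rw [← ρ.injective ((apply_nbhdMin ρ v).trans hρu.symm).symm]
  exact mem_closedNbhdFinset.1 hu

lemma nbhdMin_le [Finite V] (ρ : V ≃ β) {u v : V} (hu : u ∈ closedNbhd G v) :
    ρ (nbhdMin G ρ v) ≤ ρ u := by
  rw [apply_nbhdMin]
  exact min'_le _ _ (mem_image_of_mem ρ (mem_closedNbhdFinset.2 hu))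

lemma image_subset_image_nbhdMin [Fintype V] [DecidableEq V] {ρ : V ≃ β} {f : V → V}
    (hf : ∀ v, f v ∈ twoNbhd G v ∧ ∀ u ∈ twoNbhd G v, ρ (f v) ≤ ρ u) :
    univ.image f ⊆ univ.image (nbhdMin G ρ) := by
  simp only [subset_iff, mem_image, mem_univ, true_and, forall_exists_index,
    forall_apply_eq_imp_iff]
  intro v
  obtain ⟨hmem, hmin⟩ := hf v
  obtain ⟨u, hu, hfu⟩ := Set.mem_iUnion₂.1 hmem
  exact ⟨u, ρ.injective <| (nbhdMin_le ρ hfu).antisymm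
    (hmin _ (closedNbhd_subset_twoNbhd hu (nbhdMin_mem ρ u)))⟩

lemma card_image_le_card_filter_lt_add_card_filter_lt [Fintype V] [DecidableEq V]
    (ρ : V ≃ β) (f φ : V → V) (hφ : ∀ w, φ w ≠ w) :
    #(univ.image f) ≤ #{w | ρ w < ρ (φ w)} + #{v | ρ (φ (f v)) < ρ (f v)} := by
  have hsub : univ.image f ⊆
      ({w | ρ w < ρ (φ w)} : Finset V) ∪ {w ∈ univ.image f | ρ (φ w) < ρ w} := by
    intro w hw
    rcases (ρ.injective.ne (hφ w)).lt_or_gt with h | h <;> simp [hw, h]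
  calc #(univ.image f) ≤ #{w | ρ w < ρ (φ w)} + #{w ∈ univ.image f | ρ (φ w) < ρ w} :=
        (card_le_card hsub).trans (card_union_le _ _)
    _ ≤ #{w | ρ w < ρ (φ w)} + #{v | ρ (φ (f v)) < ρ (f v)} := by
        rw [filter_image]
        exact Nat.add_le_add_left card_image_le _

lemma isFirstTwo_of_lt_nbhdMin [Finite V] [DecidableEq V] {ρ : V ≃ β} {φ : V → V} {v w : V}
    (hw : nbhdMin G ρ v = w) (h : ρ (φ w) < ρ w) :
    φ w ∉ closedNbhd G v ∧ IsFirstTwo ρ (insert (φ w) (closedNbhdFinset G v)) (φ w) w := by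
  subst hw
  exact ⟨fun hφ => (nbhdMin_le ρ hφ).not_gt h, h, fun _ hy hyφ hyw =>
    (nbhdMin_le ρ (mem_closedNbhdFinset.1 ((mem_insert.1 hy).resolve_left hyφ))).lt_of_ne
    (ρ.injective.ne (Ne.symm hyw))⟩

lemma four_mul_card_filter_nbhdMin_lt_le [DecidableEq V] [Fintype V] [Fintype β]
    {φ : V → V} (hφ : ∀ w, G.Adj w (φ w)) (v : V) :
    4 * #{ρ : V ≃ β | ρ (φ (nbhdMin G ρ v)) < ρ (nbhdMin G ρ v)} ≤ Fintype.card (V ≃ β) := by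
  set T := closedNbhdFinset G v
  set I := {w ∈ T | φ w ∉ T}
  set E := fun w => ({ρ : V ≃ β | IsFirstTwo ρ (insert (φ w) T) (φ w) w} : Finset _)
  have hcover : ({ρ : V ≃ β | ρ (φ (nbhdMin G ρ v)) < ρ (nbhdMin G ρ v)} : Finset _) ⊆
      I.biUnion E := by
    intro ρ hρ
    obtain ⟨hφw, hfirst⟩ := isFirstTwo_of_lt_nbhdMin rfl (mem_filter.1 hρ).2
    exact mem_biUnion.2 ⟨nbhdMin G ρ v,
      mem_filter.2 ⟨mem_closedNbhdFinset.2 (nbhdMin_mem ρ v), mt mem_closedNbhdFinset.1 hφw⟩,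
      mem_filter.2 ⟨mem_univ _, hfirst⟩⟩
  have hvT : v ∈ T := mem_closedNbhdFinset.2 (self_mem_closedNbhd v)
  have hI : #I + 1 ≤ #T := by
    have hsub : I ⊆ T.erase v := fun w hw => by
      refine mem_erase.2 ⟨?_, (mem_filter.1 hw).1⟩
      rintro rfl
      exact (mem_filter.1 hw).2 (mem_closedNbhdFinset.2 (Or.inr (hφ _)))
    have := card_le_card hsub
    rw [card_erase_of_mem hvT] at this
    have : 0 < #T := card_pos.2 ⟨v, hvT⟩
    omega
  have hE : ∀ w ∈ I, (#T + 1) * #T * #(E w) ≤ Fintype.card (V ≃ β) := fun w hw => by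
    have := card_mul_card_isFirstTwo_le (β := β) (mem_insert_self (φ w) T)
      (mem_insert_of_mem (mem_filter.1 hw).1) (hφ w).ne'
    rwa [card_insert_of_notMem (mem_filter.1 hw).2, Nat.add_sub_cancel] at this
  refine Nat.le_of_mul_le_mul_left (c := (#T + 1) * #T) ?_
    (Nat.mul_pos (Nat.succ_pos #T) (by omega))
  calc (#T + 1) * #T * (4 * #{ρ : V ≃ β | ρ (φ (nbhdMin G ρ v)) < ρ (nbhdMin G ρ v)})
      ≤ 4 * ∑ w ∈ I, (#T + 1) * #T * #(E w) := by
        rw [← mul_sum, mul_left_comm]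
        gcongr
        exact (card_le_card hcover).trans card_biUnion_le
    _ ≤ 4 * (#I * Fintype.card (V ≃ β)) := by
        gcongr
        exact (sum_le_sum hE).trans (by simp)
    _ ≤ (#T + 1) * #T * Fintype.card (V ≃ β) := by
        rw [← mul_assoc]
        refine Nat.mul_le_mul_right _ ?_
        zify at hI ⊢
        nlinarith [sq_nonneg ((#T : ℤ) - 2)]

end Graph

lemma mul_sum_card_filter_le {α γ : Type*} [Fintype α] [Fintype γ] (r : α → γ → Prop)
    [∀ a b, Decidable (r a b)] {m M : ℕ} (h : ∀ b, m * #{a | r a b} ≤ M) :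
    m * ∑ a, #{b | r a b} ≤ Fintype.card γ * M :=
  calc m * ∑ a, #{b | r a b} = ∑ b, m * #{a | r a b} := by
        rw [← mul_sum]
        exact congrArg _ (sum_card_bipartiteAbove_eq_sum_card_bipartiteBelow r)
    _ ≤ ∑ _b : γ, M := sum_le_sum fun b _ => h b
    _ = Fintype.card γ * M := by simp

/-- If every vertex of a finite simple graph `G` on `n` vertices has a
neighbor, and `ρ` is a uniformly random bijection `V → {1,…,n}`, then the expected number
of distinct labels `ℓ_ρ(v)` (where `ℓ_ρ(v)` is the vertex of `N(N(v))` minimizing `ρ`)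
is at most `3n/4`. -/
theorem stmt0 {V : Type*} [Fintype V] [DecidableEq V] (G : SimpleGraph V)
    (n : ℕ) (hn : Fintype.card V = n)
    (hdeg : ∀ v : V, ∃ u, G.Adj v u)
    (ℓ : (V ≃ Fin n) → V → V)
    (hℓ : ∀ (ρ : V ≃ Fin n) (v : V),
      ℓ ρ v ∈ twoNbhd G v ∧ ∀ u ∈ twoNbhd G v, ρ (ℓ ρ v) ≤ ρ u) :
    (∑ ρ : V ≃ Fin n, ((Finset.univ.image (ℓ ρ)).card : ℝ)) /
      (Fintype.card (V ≃ Fin n) : ℝ) ≤ 3 * n / 4 := by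
  choose φ hφ using hdeg
  set N := Fintype.card (V ≃ Fin n)
  have hN : 0 < N := Fintype.card_pos_iff.2 ⟨Fintype.equivFinOfCardEq hn⟩
  have hlabels : ∀ ρ : V ≃ Fin n, #(univ.image (ℓ ρ)) ≤
      #{w | ρ w < ρ (φ w)} + #{v | ρ (φ (nbhdMin G ρ v)) < ρ (nbhdMin G ρ v)} := fun ρ =>
    (card_le_card (image_subset_image_nbhdMin (hℓ ρ))).trans
      (card_image_le_card_filter_lt_add_card_filter_lt ρ _ φ fun w => (hφ w).ne')
  have hrises : 2 * ∑ ρ : V ≃ Fin n, #{w | ρ w < ρ (φ w)} ≤ n * N :=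
    (mul_sum_card_filter_le _ fun w => two_mul_card_filter_lt_le (hφ w).ne).trans_eq
      (by rw [hn])
  have hescapes : 4 * ∑ ρ : V ≃ Fin n, #{v | ρ (φ (nbhdMin G ρ v)) < ρ (nbhdMin G ρ v)} ≤
      n * N :=
    (mul_sum_card_filter_le _ (four_mul_card_filter_nbhdMin_lt_le hφ)).trans_eq
      (by rw [hn])
  have hcount : (∑ ρ : V ≃ Fin n, #(univ.image (ℓ ρ))) * 4 ≤ 3 * n * N := by
    have := sum_le_sum fun ρ (_ : ρ ∈ univ) => hlabels ρ
    rw [sum_add_distrib] at this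
    linarith
  rw [div_le_div_iff₀ (by exact_mod_cast hN) four_pos]
  exact_mod_cast hcount
end

section
/- Let G be a finite simple graph on a vertex set V of size n in which every vertex has at least one neighbor, and let ρ : V → ℕ be injective. Then for every vertex v ∈ V there exists a nonnegative integer d(v) such that for every i ≥ d(v), f_ρ^{i}(v) = f_ρ^{i+2}(v), where f_ρ^{i} denotes the i-th iterate of f_ρ. -/
/-!
Since `v` is a neighbour of `f v`, the minimality of `ρ (f (f v))` among the neighbours of `f v`
gives `ρ (f (f v)) ≤ ρ v`. So `ρ` does not increase along the orbit of `v` under `f ∘ f`, and being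
injective it strictly decreases until that orbit reaches a fixed point of `f ∘ f`; from then on the
orbit of `v` under `f` alternates between two vertices.
-/

open Function

namespace Function

theorem exists_isFixedPt_iterate_of_injective_of_le {α : Type*} {g : α → α} {ρ : α → ℕ}
    (hρ : Injective ρ) (hg : ∀ x, ρ (g x) ≤ ρ x) (x : α) : ∃ k, IsFixedPt g (g^[k] x) := by
  induction hx : ρ x using Nat.strong_induction_on generalizing x with
  | _ r ih =>
    by_cases hfix : g x = x
    · exact ⟨0, hfix⟩
    · have hlt : ρ (g x) < r := hx ▸ lt_of_le_of_ne (hg x) fun h => hfix (hρ h)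
      obtain ⟨k, hk⟩ := ih _ hlt (g x) rfl
      exact ⟨k + 1, hk⟩

theorem iterate_add_eq_of_isFixedPt_iterate {α : Type*} {f : α → α} {x : α} {m p : ℕ}
    (h : IsFixedPt f^[p] (f^[m] x)) {i : ℕ} (hi : m ≤ i) : f^[i + p] x = f^[i] x := by
  obtain ⟨j, rfl⟩ := Nat.exists_eq_add_of_le' hi
  rw [add_assoc, add_comm m p, iterate_add_apply, iterate_add_apply, iterate_add_apply, h.eq]

end Function

theorem stmt2_general {V : Type*} (G : SimpleGraph V)
    (ρ : V → ℕ) (hρ : Function.Injective ρ)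
    (f : V → V)
    (hf : ∀ v : V, G.Adj v (f v) ∧ ∀ u, G.Adj v u → ρ (f v) ≤ ρ u) :
    ∀ v : V, ∃ d : ℕ, ∀ i ≥ d, f^[i] v = f^[i + 2] v := by
  intro v
  have hρ_le : ∀ w, ρ (f^[2] w) ≤ ρ w := fun w => (hf (f w)).2 w (hf w).1.symm
  obtain ⟨k, hk⟩ := exists_isFixedPt_iterate_of_injective_of_le hρ hρ_le v
  rw [← iterate_mul] at hk
  exact ⟨2 * k, fun i hi => (iterate_add_eq_of_isFixedPt_iterate hk hi).symm⟩

/-- Let `G` be a finite simple graph on `n` vertices in which every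
vertex has a neighbor, let `ρ : V → ℕ` be injective, and let `f v` be the neighbor of `v`
minimizing `ρ`.  Then for every vertex `v` there is a nonnegative integer `d` such that
`f^[i] v = f^[i+2] v` for all `i ≥ d`. -/
theorem stmt2 {V : Type*} [Fintype V] (G : SimpleGraph V)
    (n : ℕ) (hn : Fintype.card V = n)
    (hdeg : ∀ v : V, ∃ u, G.Adj v u)
    (ρ : V → ℕ) (hρ : Function.Injective ρ)
    (f : V → V)
    (hf : ∀ v : V, G.Adj v (f v) ∧ ∀ u, G.Adj v u → ρ (f v) ≤ ρ u) :
    ∀ v : V, ∃ d : ℕ, ∀ i ≥ d, f^[i] v = f^[i + 2] v :=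
  stmt2_general G ρ hρ f hf
end

section
/- Let G be a finite simple graph on a vertex set V of size n in which every vertex has at least one neighbor, and let ρ : V → ℕ be injective. Then two vertices u and w belong to the same connected component of the undirected functional graph H if and only if {f_ρ^{d(u)}(u), f_ρ^{d(u)+1}(u)} = {f_ρ^{d(w)}(w), f_ρ^{d(w)+1}(w)} as sets. -/
/-!
Every forward orbit of `f` ends in the cycle `{f^[d v] v, f^[d v + 1] v}` of length at most two,
and this pair does not change when `v` is replaced by `f v`. Since every edge of `H` joins some
`x` to `f x`, the pair is constant on the components of `H`. Conversely `v` reaches both points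
of its pair along `H`, so two vertices with the same pair are joined through it.
-/

open Function SimpleGraph

section OrbitPair

variable {α : Type*} {f : α → α}

def orbitPair (f : α → α) (k : ℕ) (x : α) : Set α := {f^[k] x, f^[k + 1] x}

theorem isPeriodicPt_two_iterate_iff {k : ℕ} {x : α} :
    IsPeriodicPt f 2 (f^[k] x) ↔ f^[k + 2] x = f^[k] x := by
  rw [IsPeriodicPt, IsFixedPt, ← iterate_add_apply, Nat.add_comm]

theorem orbitPair_apply (k : ℕ) (x : α) : orbitPair f k (f x) = orbitPair f (k + 1) x := by
  simp only [orbitPair, ← iterate_succ_apply]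

theorem orbitPair_succ_of_isPeriodicPt {k : ℕ} {x : α} (h : IsPeriodicPt f 2 (f^[k] x)) :
    orbitPair f (k + 1) x = orbitPair f k x := by
  rw [orbitPair, orbitPair, isPeriodicPt_two_iterate_iff.mp h, Set.pair_comm]

theorem orbitPair_eq_of_le {a k : ℕ} {x : α} (h : IsPeriodicPt f 2 (f^[a] x)) (hk : a ≤ k) :
    orbitPair f k x = orbitPair f a x := by
  induction k, hk using Nat.le_induction with
  | base => rfl
  | succ k hak ih =>
    have hk : IsPeriodicPt f 2 (f^[k] x) := by
      simpa only [← iterate_add_apply, Nat.sub_add_cancel hak] using h.apply_iterate (k - a)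
    rw [orbitPair_succ_of_isPeriodicPt hk, ih]

theorem orbitPair_eq_of_isPeriodicPt {a b : ℕ} {x : α} (ha : IsPeriodicPt f 2 (f^[a] x))
    (hb : IsPeriodicPt f 2 (f^[b] x)) : orbitPair f a x = orbitPair f b x := by
  rcases le_total a b with hab | hba
  · exact (orbitPair_eq_of_le ha hab).symm
  · exact orbitPair_eq_of_le hb hba

end OrbitPair

section FunctionalGraph

variable {α β : Type*} {f : α → α}

theorem reachable_fromRel_iterate (x : α) (k : ℕ) :
    (fromRel fun a b => f a = b).Reachable x (f^[k] x) := by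
  induction k with
  | zero => rfl
  | succ k ih =>
    rw [iterate_succ_apply']
    refine ih.trans ?_
    by_cases hfix : f^[k] x = f (f^[k] x)
    · rw [← hfix]
    · exact (fromRel_adj _ _ _).mpr ⟨hfix, Or.inl rfl⟩ |>.reachable

theorem reachable_fromRel_of_mem_orbitPair {k : ℕ} {x y : α} (h : y ∈ orbitPair f k x) :
    (fromRel fun a b => f a = b).Reachable x y := by
  rcases h with rfl | rfl
  exacts [reachable_fromRel_iterate x k, reachable_fromRel_iterate x (k + 1)]

theorem eq_of_reachable_fromRel {g : α → β} (hg : ∀ x, g (f x) = g x) {u w : α}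
    (h : (fromRel fun a b => f a = b).Reachable u w) : g u = g w := by
  rw [reachable_iff_reflTransGen] at h
  induction h with
  | refl => rfl
  | tail _ hadj ih =>
    rcases ((fromRel_adj _ _ _).mp hadj).2 with rfl | rfl
    exacts [ih.trans (hg _).symm, ih.trans (hg _)]

end FunctionalGraph

theorem stmt5_general {V : Type*}
    (f : V → V)
    (d : V → ℕ)
    (hd : ∀ v : V, f^[d v + 2] v = f^[d v] v ∧
      ∀ e : ℕ, f^[e + 2] v = f^[e] v → d v ≤ e) :
    ∀ u w : V,
      (SimpleGraph.fromRel fun a b => f a = b).Reachable u w ↔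
        ({f^[d u] u, f^[d u + 1] u} : Set V) = {f^[d w] w, f^[d w + 1] w} := by
  have hper (v : V) : IsPeriodicPt f 2 (f^[d v] v) := isPeriodicPt_two_iterate_iff.mpr (hd v).1
  have hstep (v : V) : orbitPair f (d (f v)) (f v) = orbitPair f (d v) v := by
    rw [orbitPair_apply]
    refine orbitPair_eq_of_isPeriodicPt ?_ (hper v)
    simpa only [iterate_succ_apply] using hper (f v)
  intro u w
  refine ⟨eq_of_reachable_fromRel (g := fun v => orbitPair f (d v) v) hstep, fun hpair => ?_⟩
  have hu : f^[d u] u ∈ orbitPair f (d w) w := by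
    rw [orbitPair, ← hpair]
    exact Set.mem_insert _ _
  exact (reachable_fromRel_iterate u (d u)).trans (reachable_fromRel_of_mem_orbitPair hu).symm

/-- Let `G` be a finite simple graph in which every vertex has a
neighbor, `ρ : V → ℕ` injective, `f v` the neighbor of `v` minimizing `ρ`, and `d v`
the least `d` with `f^[d+2] v = f^[d] v`.  Two vertices `u, w` lie in the same connected
component of the undirected functional graph `H` (edge set `{{v, f v}}`) if and only if
`{f^[d u] u, f^[d u + 1] u} = {f^[d w] w, f^[d w + 1] w}` as sets. -/
theorem stmt5 {V : Type*} [Fintype V] (G : SimpleGraph V)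
    (n : ℕ) (hn : Fintype.card V = n)
    (hdeg : ∀ v : V, ∃ u, G.Adj v u)
    (ρ : V → ℕ) (hρ : Function.Injective ρ)
    (f : V → V)
    (hf : ∀ v : V, G.Adj v (f v) ∧ ∀ u, G.Adj v u → ρ (f v) ≤ ρ u)
    (d : V → ℕ)
    (hd : ∀ v : V, f^[d v + 2] v = f^[d v] v ∧
      ∀ e : ℕ, f^[e + 2] v = f^[e] v → d v ≤ e) :
    ∀ u w : V,
      (SimpleGraph.fromRel fun a b => f a = b).Reachable u w ↔
        ({f^[d u] u, f^[d u + 1] u} : Set V) = {f^[d w] w, f^[d w + 1] w} :=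
  stmt5_general f d hd
end

section
/- Let P_n be the path graph on vertices v_1, …, v_n (with v_i adjacent to v_{i+1} for 1 ≤ i < n) and let ρ be any injective function from its vertex set to ℕ. Then the number of distinct labels, |{ℓ_ρ(v) : v ∈ V(P_n)}|, is at least n/5. Consequently, one contraction phase of LocalContraction shortens a path by a factor of at most 5. -/
open Function SimpleGraph

/-!
Every label `ℓ v` lies within distance 2 of `v` on the path, so each label is shared by at
most the 5 vertices of a window of width 5 around it, and there are at least `n / 5` labels.
-/

lemma le_add_one_of_mem_closedNbhd_pathGraph {n : ℕ} {u v : Fin n}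
    (h : u ∈ closedNbhd (pathGraph n) v) : (u : ℕ) ≤ v + 1 ∧ (v : ℕ) ≤ u + 1 := by
  rcases h with rfl | h
  · omega
  · rw [pathGraph_adj] at h
    omega

lemma le_add_two_of_mem_twoNbhd_pathGraph {n : ℕ} {u v : Fin n}
    (h : u ∈ twoNbhd (pathGraph n) v) : (u : ℕ) ≤ v + 2 ∧ (v : ℕ) ≤ u + 2 := by
  simp only [twoNbhd, Set.mem_iUnion] at h
  obtain ⟨w, hw, hu⟩ := h
  have hwv := le_add_one_of_mem_closedNbhd_pathGraph hw
  have huw := le_add_one_of_mem_closedNbhd_pathGraph hu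
  omega

lemma Fin.card_le_of_forall_near {n : ℕ} (s : Finset (Fin n)) (w r : ℕ)
    (h : ∀ v ∈ s, (v : ℕ) ≤ w + r ∧ w ≤ v + r) : s.card ≤ 2 * r + 1 := by
  have hIcc : s.card ≤ (Finset.Icc (w - r) (w + r)).card := by
    refine Finset.card_le_card_of_injOn Fin.val (fun v hv => ?_) Fin.val_injective.injOn
    have := h v hv
    simp only [Finset.mem_coe, Finset.mem_Icc]
    omega
  rw [Nat.card_Icc] at hIcc
  omega

lemma Fin.card_le_mul_card_image_of_near {n m : ℕ} (f : Fin n → Fin m) (r : ℕ)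
    (hf : ∀ v : Fin n, (v : ℕ) ≤ f v + r ∧ (f v : ℕ) ≤ v + r) :
    n ≤ (2 * r + 1) * (Finset.univ.image f).card := by
  have hfiber : ∀ w ∈ Finset.univ.image f, (Finset.univ.filter (f · = w)).card ≤ 2 * r + 1 :=
    fun w _ => Fin.card_le_of_forall_near _ w r fun v hv => by
      obtain rfl := (Finset.mem_filter.mp hv).2
      exact hf v
  simpa using Finset.card_le_mul_card_image Finset.univ (2 * r + 1) hfiber

theorem stmt12_general (n : ℕ) (ρ : Fin n → ℕ)
    (ℓ : Fin n → Fin n)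
    (hℓ : ∀ v : Fin n, ℓ v ∈ twoNbhd (pathGraph n) v ∧
      ∀ u ∈ twoNbhd (pathGraph n) v, ρ (ℓ v) ≤ ρ u) :
    (n : ℝ) / 5 ≤ ((Finset.univ.image ℓ).card : ℝ) := by
  have hcard : n ≤ 5 * (Finset.univ.image ℓ).card :=
    Fin.card_le_mul_card_image_of_near ℓ 2 fun v =>
      (le_add_two_of_mem_twoNbhd_pathGraph (hℓ v).1).symm
  rw [div_le_iff₀ (by norm_num)]
  exact_mod_cast hcard.trans_eq (mul_comm _ _)

/-- Let `P_n` be the path graph on `n` vertices, `ρ` an injective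
function from its vertices to `ℕ`, and `ℓ v` the vertex of `N(N(v))` minimizing `ρ`.
Then the number of distinct labels is at least `n/5` (so one contraction phase of
LocalContraction shortens a path by a factor of at most 5). -/
theorem stmt12 (n : ℕ) (ρ : Fin n → ℕ) (hρ : Function.Injective ρ)
    (ℓ : Fin n → Fin n)
    (hℓ : ∀ v : Fin n, ℓ v ∈ twoNbhd (pathGraph n) v ∧
      ∀ u ∈ twoNbhd (pathGraph n) v, ρ (ℓ v) ≤ ρ u) :
    (n : ℝ) / 5 ≤ ((Finset.univ.image ℓ).card : ℝ) :=
  stmt12_general n ρ ℓ hℓ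
end

section
/- There exist a constant c > 0 and a threshold n₀ such that for every n ≥ n₀ the following holds. Let P_n be the path graph on n vertices and let ρ be chosen uniformly at random among bijections from its vertex set to {1,…,n}. Then with probability at least 1 − e^{−c·n}, the undirected functional graph H of f_ρ (with edge set {{v, f_ρ(v)} : v ∈ V}) has at least n/26 connected components. Consequently, TreeContraction requires Ω(log n) phases on a path of length n with high probability. -/
/-!
Split the path into `n / 6` blocks of six consecutive vertices. If `ρ j < ρ (j + 2)` and
`ρ (j + 3) < ρ (j + 1)`, then neither of `j + 1`, `j + 2` points at the other, so no edge of `H`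
crosses between them; as `H` is a subgraph of the path, each such uncrossed position starts a new
component.

Precomposing `ρ` with the swap of the two halves of a block is a bijection of permutations which,
thanks to a tie-break, toggles whether that block is good and leaves the other blocks alone. So the
set of good blocks is uniformly distributed over the subsets of the `n / 6` blocks, and at most
`n / 26` of them are good with probability at most `4 ^ (n / 26) * (5 / 8) ^ (n / 6) ≤ e ^ (-n / 100)`,
by the exponential-moment bound `#{b ⊆ s | #b ≤ T} * x ^ T ≤ (1 + x) ^ #s` at `x = 1 / 4`.
-/

open Finset Function SimpleGraph

theorem SimpleGraph.Reachable.eq_of_forall_adj {V β : Type*} {G : SimpleGraph V} {g : V → β}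
    (hg : ∀ u w, G.Adj u w → g u = g w) {u w : V} (h : G.Reachable u w) : g u = g w := by
  obtain ⟨p⟩ := h
  induction p with
  | nil => rfl
  | cons huv _ ih => exact (hg _ _ huv).trans ih

theorem SimpleGraph.card_le_card_connectedComponent_of_le_pathGraph {n : ℕ}
    {G : SimpleGraph (Fin n)} (hG : G ≤ pathGraph n) {C : Finset (Fin n)}
    (hC : ∀ c ∈ C, ∀ u : Fin n, u.val + 1 = c.val → ¬ G.Adj u c) :
    #C ≤ Nat.card G.ConnectedComponent := by
  classical
  let g : Fin n → ℕ := fun v => #{c ∈ C | c ≤ v}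
  have hsucc : ∀ u w : Fin n, G.Adj u w → u.val + 1 = w.val → g u = g w := by
    intro u w huw hsucc
    refine congrArg card (filter_congr fun c hc => ?_)
    have hcw : c ≠ w := by
      rintro rfl
      exact hC c hc u hsucc huw
    rw [Fin.le_def, Fin.le_def]
    have := Fin.val_ne_of_ne hcw
    omega
  have hg : ∀ u w, G.Adj u w → g u = g w := fun u w huw =>
    (pathGraph_adj.mp (hG huw)).elim (hsucc u w huw) fun h => (hsucc w u huw.symm h).symm
  have hmono : StrictMonoOn g C := by
    intro c hc c' hc' hlt
    refine card_lt_card ⟨fun v hv => ?_, fun h => ?_⟩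
    · rw [mem_filter] at hv ⊢
      exact ⟨hv.1, hv.2.trans hlt.le⟩
    exact (mem_filter.mp (h (mem_filter.mpr ⟨hc', le_rfl⟩))).2.not_gt hlt
  have hinj : Set.InjOn G.connectedComponentMk C := fun c hc c' hc' h =>
    hmono.injOn hc hc' ((ConnectedComponent.exact h).eq_of_forall_adj hg)
  rw [Nat.card_eq_fintype_card, ← card_univ]
  exact card_le_card_of_injOn _ (fun _ _ => mem_univ _) hinj

theorem Finset.card_filter_mul_two_pow_eq {α ι : Type*} [Fintype α] [DecidableEq ι]
    {s : Finset ι} {K : α → Finset ι} (hK : ∀ x, K x ⊆ s)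
    (hσ : ∀ b ⊆ s, ∃ σ : Equiv.Perm α, ∀ x, K (σ x) = symmDiff (K x) b)
    (P : Finset ι → Prop) [DecidablePred P] :
    #{x | P (K x)} * 2 ^ #s = #{b ∈ s.powerset | P b} * Fintype.card α := by
  have hfiber : ∀ b ∈ s.powerset, #{x | K x = b} = #{x | K x = ∅} := by
    intro b hb
    obtain ⟨σ, hσ⟩ := hσ b (mem_powerset.mp hb)
    apply le_antisymm
    · refine card_le_card_of_injOn σ (fun x hx => ?_) σ.injective.injOn
      simp_all
    · refine card_le_card_of_injOn σ (fun x hx => ?_) σ.injective.injOn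
      simp_all
  have hsum : ∀ t ⊆ s.powerset, ∑ b ∈ t, #{x | K x = b} = #t * #{x | K x = ∅} := fun t ht => by
    rw [sum_congr rfl fun b hb => hfiber b (ht hb), sum_const, smul_eq_mul]
  have hall : Fintype.card α = 2 ^ #s * #{x | K x = ∅} := by
    rw [← card_univ, card_eq_sum_card_fiberwise fun x _ => mem_powerset.mpr (hK x),
      hsum _ subset_rfl, card_powerset]
  have hP : #{x | P (K x)} = #{b ∈ s.powerset | P b} * #{x | K x = ∅} := by
    rw [card_eq_sum_card_fiberwise (t := {b ∈ s.powerset | P b}) fun x hx =>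
      mem_filter.mpr ⟨mem_powerset.mpr (hK x), (mem_filter.mp hx).2⟩, ← hsum _ (filter_subset _ _)]
    refine sum_congr rfl fun b hb => congrArg card ?_
    rw [filter_filter]
    exact filter_congr fun x _ => ⟨And.right, fun h => ⟨h ▸ (mem_filter.mp hb).2, h⟩⟩
  rw [hall, hP]
  ring

theorem Finset.card_filter_powerset_card_le_mul_pow_le {ι R : Type*} [CommSemiring R]
    [PartialOrder R] [IsOrderedRing R] (s : Finset ι) (T : ℕ) {x : R} (hx₀ : 0 ≤ x)
    (hx₁ : x ≤ 1) :
    #{b ∈ s.powerset | #b ≤ T} * x ^ T ≤ (1 + x) ^ #s := by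
  calc #{b ∈ s.powerset | #b ≤ T} * x ^ T = ∑ b ∈ s.powerset with #b ≤ T, x ^ T := by
        rw [sum_const, nsmul_eq_mul]
    _ ≤ ∑ b ∈ s.powerset with #b ≤ T, x ^ #b :=
        sum_le_sum fun b hb => pow_le_pow_of_le_one hx₀ hx₁ (mem_filter.mp hb).2
    _ ≤ ∑ b ∈ s.powerset, x ^ #b :=
        sum_le_sum_of_subset_of_nonneg (filter_subset _ _) fun _ _ _ => pow_nonneg hx₀ _
    _ = (1 + x) ^ #s := by simpa [add_comm] using sum_pow_mul_eq_add_pow x 1 s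

namespace PathMinNeighbor

/-- A cut between positions `i + 1` and `i + 2` of the block, for some `i ≤ 2`. -/
def HasCut (x : Fin 6 → ℕ) : Prop :=
  x 0 < x 2 ∧ x 3 < x 1 ∨ x 1 < x 3 ∧ x 4 < x 2 ∨ x 2 < x 4 ∧ x 5 < x 3

/-- For injective `x`, one of `x` and its half-swap `x ∘ (· + 3)` has a cut; comparing `x 0` with
`x 3` breaks the tie so that the half-swap negates `IsGood` (`isGood_comp_add_three_iff`). -/
def IsGood (x : Fin 6 → ℕ) : Prop :=
  HasCut x ∧ (HasCut (x ∘ (· + 3)) → x 0 < x 3)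

instance : DecidablePred IsGood := fun x => by
  unfold IsGood HasCut
  infer_instance

theorem isGood_comp_add_three_iff {x : Fin 6 → ℕ} (hx : Injective x) :
    IsGood (x ∘ (· + 3)) ↔ ¬ IsGood x := by
  -- the only pairs that `IsGood` compares
  have h02 := hx.ne (show (0 : Fin 6) ≠ 2 by decide)
  have h13 := hx.ne (show (1 : Fin 6) ≠ 3 by decide)
  have h24 := hx.ne (show (2 : Fin 6) ≠ 4 by decide)
  have h35 := hx.ne (show (3 : Fin 6) ≠ 5 by decide)
  have h04 := hx.ne (show (0 : Fin 6) ≠ 4 by decide)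
  have h15 := hx.ne (show (1 : Fin 6) ≠ 5 by decide)
  have h03 := hx.ne (show (0 : Fin 6) ≠ 3 by decide)
  simp only [IsGood, HasCut, comp_apply, Fin.reduceAdd]
  omega

variable {n : ℕ}

-- extended by the identity past `n`, so that it stays injective on all of `ℕ`
def prio (ρ : Equiv.Perm (Fin n)) (i : ℕ) : ℕ :=
  if h : i < n then ρ ⟨i, h⟩ else i

theorem prio_of_lt (ρ : Equiv.Perm (Fin n)) {i : ℕ} (h : i < n) : prio ρ i = ρ ⟨i, h⟩ :=
  dif_pos h

theorem prio_injective (ρ : Equiv.Perm (Fin n)) : Injective (prio ρ) := by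
  intro i j hij
  unfold prio at hij
  split_ifs at hij with hi hj hj
  · simpa using ρ.injective (Fin.ext hij)
  · have := (ρ ⟨i, hi⟩).isLt
    omega
  · have := (ρ ⟨j, hj⟩).isLt
    omega
  · exact hij

def block (p : ℕ → ℕ) (k : ℕ) : Fin 6 → ℕ := fun r => p (6 * k + r)

theorem block_injective {p : ℕ → ℕ} (hp : Injective p) (k : ℕ) : Injective (block p k) :=
  fun r s h => Fin.ext (by simpa using hp h)

def goodBlocks (ρ : Equiv.Perm (Fin n)) : Finset ℕ :=
  {k ∈ range (n / 6) | IsGood (block (prio ρ) k)}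

def swapHalves (b : Finset ℕ) (i : ℕ) : ℕ :=
  if i / 6 ∈ b then 6 * (i / 6) + (i % 6 + 3) % 6 else i

theorem swapHalves_involutive (b : Finset ℕ) : Involutive (swapHalves b) := by
  intro i
  by_cases h : i / 6 ∈ b
  · have h6 : (6 * (i / 6) + (i % 6 + 3) % 6) / 6 = i / 6 := by omega
    simp only [swapHalves, if_pos h, h6]
    omega
  · simp only [swapHalves, if_neg h]

theorem swapHalves_of_not_mem {b : Finset ℕ} {i : ℕ} (h : i / 6 ∉ b) : swapHalves b i = i :=
  if_neg h

theorem swapHalves_lt {b : Finset ℕ} (hb : b ⊆ range (n / 6)) {i : ℕ} (h : i < n) :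
    swapHalves b i < n := by
  unfold swapHalves
  split_ifs with hi
  · have := mem_range.mp (hb hi)
    omega
  · exact h

theorem block_comp_swapHalves_of_mem (p : ℕ → ℕ) {b : Finset ℕ} {k : ℕ} (hk : k ∈ b) :
    block (p ∘ swapHalves b) k = block p k ∘ (· + 3) := by
  funext r
  have hr := r.isLt
  have hdiv : (6 * k + r) / 6 = k := by omega
  simp only [block, comp_apply, swapHalves, hdiv, if_pos hk, Fin.val_add]
  congr 1
  omega

theorem block_comp_swapHalves_of_not_mem (p : ℕ → ℕ) {b : Finset ℕ} {k : ℕ} (hk : k ∉ b) :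
    block (p ∘ swapHalves b) k = block p k := by
  funext r
  have hdiv : (6 * k + r) / 6 = k := by omega
  simp only [block, comp_apply, swapHalves_of_not_mem (hdiv ▸ hk)]

def swapHalvesPerm {b : Finset ℕ} (hb : b ⊆ range (n / 6)) : Equiv.Perm (Fin n) :=
  Involutive.toPerm (fun v => ⟨swapHalves b v, swapHalves_lt hb v.isLt⟩)
    fun v => Fin.ext (swapHalves_involutive b v)

theorem prio_mul_swapHalvesPerm {b : Finset ℕ} (hb : b ⊆ range (n / 6))
    (ρ : Equiv.Perm (Fin n)) : prio (ρ * swapHalvesPerm hb) = prio ρ ∘ swapHalves b := by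
  funext i
  by_cases h : i < n
  · rw [comp_apply, prio_of_lt _ h, prio_of_lt _ (swapHalves_lt hb h)]
    rfl
  · have hi : i / 6 ∉ b := fun hi => h (by have := mem_range.mp (hb hi); omega)
    simp [prio, h, swapHalves_of_not_mem hi]

theorem goodBlocks_mul_swapHalvesPerm {b : Finset ℕ} (hb : b ⊆ range (n / 6))
    (ρ : Equiv.Perm (Fin n)) :
    goodBlocks (ρ * swapHalvesPerm hb) = symmDiff (goodBlocks ρ) b := by
  ext k
  simp only [goodBlocks, mem_filter, mem_range, mem_symmDiff, prio_mul_swapHalvesPerm]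
  by_cases hk : k ∈ b
  · rw [block_comp_swapHalves_of_mem _ hk,
      isGood_comp_add_three_iff (block_injective (prio_injective ρ) k)]
    have := mem_range.mp (hb hk)
    tauto
  · rw [block_comp_swapHalves_of_not_mem _ hk]
    tauto

def IsMinNeighborMap (ρ : Equiv.Perm (Fin n)) (g : Fin n → Fin n) : Prop :=
  ∀ v, (pathGraph n).Adj v (g v) ∧ ∀ u, (pathGraph n).Adj v u → ρ (g v) ≤ ρ u

section MinNeighborMap

variable {ρ : Equiv.Perm (Fin n)} {g : Fin n → Fin n} (hg : IsMinNeighborMap ρ g)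
include hg

theorem fromRel_le_pathGraph : fromRel (fun u w => g u = w) ≤ pathGraph n := by
  intro u w h
  obtain ⟨-, rfl | rfl⟩ := fromRel_adj _ u w |>.mp h
  · exact (hg u).1
  · exact (hg w).1.symm

theorem not_fromRel_adj_of_prio_lt {j : ℕ} (hj : j + 3 < n)
    (h₁ : prio ρ j < prio ρ (j + 2)) (h₂ : prio ρ (j + 3) < prio ρ (j + 1)) :
    ¬ (fromRel fun u w => g u = w).Adj ⟨j + 1, by omega⟩ ⟨j + 2, by omega⟩ := by
  rw [prio_of_lt ρ (by omega), prio_of_lt ρ (by omega)] at h₁ h₂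
  rw [fromRel_adj]
  rintro ⟨-, h | h⟩
  · have := (hg ⟨j + 1, by omega⟩).2 ⟨j, by omega⟩ (pathGraph_adj.mpr (by simp))
    rw [h, Fin.le_def] at this
    omega
  · have := (hg ⟨j + 2, by omega⟩).2 ⟨j + 3, by omega⟩ (pathGraph_adj.mpr (by simp))
    rw [h, Fin.le_def] at this
    omega

theorem exists_uncrossed_of_hasCut {k : ℕ} (hk : k < n / 6) (hcut : HasCut (block (prio ρ) k)) :
    ∃ c : Fin n, c.val / 6 = k ∧
      ∀ u : Fin n, u.val + 1 = c.val → ¬ (fromRel fun u w => g u = w).Adj u c := by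
  have hcut_at : ∀ j, 6 * k ≤ j → j ≤ 6 * k + 2 → prio ρ j < prio ρ (j + 2) →
      prio ρ (j + 3) < prio ρ (j + 1) → ∃ c : Fin n, c.val / 6 = k ∧
        ∀ u : Fin n, u.val + 1 = c.val → ¬ (fromRel fun u w => g u = w).Adj u c := by
    intro j hj₀ hj₁ h₁ h₂
    refine ⟨⟨j + 2, by omega⟩, by simp only; omega, fun u hu => ?_⟩
    rw [show u = ⟨j + 1, by omega⟩ from Fin.ext (by simp only at hu ⊢; omega)]
    exact not_fromRel_adj_of_prio_lt hg (by omega) h₁ h₂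
  norm_num [HasCut, block] at hcut
  rcases hcut with ⟨h₁, h₂⟩ | ⟨h₁, h₂⟩ | ⟨h₁, h₂⟩
  · exact hcut_at (6 * k) le_rfl (by omega) h₁ h₂
  · exact hcut_at (6 * k + 1) (by omega) (by omega) h₁ h₂
  · exact hcut_at (6 * k + 2) (by omega) le_rfl h₁ h₂

theorem card_goodBlocks_le_card_connectedComponent :
    #(goodBlocks ρ) ≤ Nat.card (fromRel fun u w => g u = w).ConnectedComponent := by
  classical
  let C : Finset (Fin n) :=
    {c | ∀ u : Fin n, u.val + 1 = c.val → ¬ (fromRel fun u w => g u = w).Adj u c}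
  calc #(goodBlocks ρ) ≤ #C := by
        refine card_le_card_of_surjOn (fun c : Fin n => c.val / 6) fun k hk => ?_
        obtain ⟨hk, hgood⟩ := mem_filter.mp hk
        obtain ⟨c, hck, hc⟩ := exists_uncrossed_of_hasCut hg (mem_range.mp hk) hgood.1
        exact ⟨c, by simpa [C] using hc, hck⟩
    _ ≤ _ := card_le_card_connectedComponent_of_le_pathGraph (fromRel_le_pathGraph hg)
        fun c hc => (mem_filter.mp hc).2

end MinNeighborMap

theorem four_pow_mul_five_div_eight_pow_le {n : ℕ} (hn : 312 ≤ n) :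
    (4 : ℝ) ^ (n / 26) * (5 / 8) ^ (n / 6) ≤ (99 / 100) ^ n := by
  obtain ⟨q, r, hr, rfl⟩ : ∃ q r, r < 78 ∧ n = 78 * q + r :=
    ⟨n / 78, n % 78, Nat.mod_lt _ (by norm_num), (Nat.div_add_mod n 78).symm⟩
  have hq : 4 ≤ q := by omega
  have hbase : (16 : ℝ) ≤ (99 / 100) ^ 77 * 3 ^ q :=
    calc (16 : ℝ) ≤ (99 / 100) ^ 77 * 3 ^ 4 := by norm_num
      _ ≤ (99 / 100) ^ 77 * 3 ^ q := by gcongr; norm_num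
  calc (4 : ℝ) ^ ((78 * q + r) / 26) * (5 / 8) ^ ((78 * q + r) / 6)
      ≤ 4 ^ (3 * q + 2) * (5 / 8) ^ (13 * q) :=
        mul_le_mul (pow_le_pow_right₀ (by norm_num) (by omega))
          (pow_le_pow_of_le_one (by norm_num) (by norm_num) (by omega)) (by positivity)
          (by positivity)
    _ = 16 * (4 ^ 3 * (5 / 8) ^ 13) ^ q := by
        rw [mul_pow, ← pow_mul, ← pow_mul, pow_add]
        ring
    _ ≤ (99 / 100) ^ 77 * 3 ^ q * (4 ^ 3 * (5 / 8) ^ 13) ^ q := by gcongr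
    _ = (99 / 100) ^ 77 * (3 * (4 ^ 3 * (5 / 8) ^ 13)) ^ q := by rw [mul_assoc, ← mul_pow]
    _ ≤ (99 / 100) ^ 77 * ((99 / 100) ^ 78) ^ q := by gcongr; norm_num
    _ = (99 / 100) ^ (78 * q + 77) := by rw [pow_add, pow_mul, mul_comm]
    _ ≤ (99 / 100) ^ (78 * q + r) := pow_le_pow_of_le_one (by norm_num) (by norm_num) (by omega)

theorem card_filter_card_goodBlocks_le {n : ℕ} (hn : 312 ≤ n) :
    (#{ρ : Equiv.Perm (Fin n) | #(goodBlocks ρ) ≤ n / 26} : ℝ)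
      ≤ Real.exp (-(1 / 100) * n) * Fintype.card (Equiv.Perm (Fin n)) := by
  have huniform := card_filter_mul_two_pow_eq (s := range (n / 6)) (K := goodBlocks)
    (fun _ => filter_subset _ _)
    (fun b hb => ⟨Equiv.mulRight (swapHalvesPerm hb), goodBlocks_mul_swapHalvesPerm hb⟩)
    (fun b => #b ≤ n / 26)
  have hsubsets := card_filter_powerset_card_le_mul_pow_le (range (n / 6)) (n / 26)
    (x := (1 / 4 : ℝ)) (by norm_num) (by norm_num)
  have hexp : (99 / 100 : ℝ) ^ n ≤ Real.exp (-(1 / 100) * n) := by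
    rw [mul_comm, Real.exp_nat_mul]
    gcongr
    linarith [Real.add_one_le_exp (-(1 / 100))]
  rw [card_range] at huniform hsubsets
  set T := n / 26
  set m := n / 6
  set F := #{b ∈ (range m).powerset | #b ≤ T}
  have hF : (F : ℝ) ≤ 4 ^ T * (5 / 4) ^ m := by
    have h : (1 / 4 : ℝ) ^ T * 4 ^ T = 1 := by rw [← mul_pow]; norm_num
    calc (F : ℝ) = F * (1 / 4) ^ T * 4 ^ T := by rw [mul_assoc, h, mul_one]
      _ ≤ (1 + 1 / 4) ^ m * 4 ^ T := by gcongr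
      _ = 4 ^ T * (5 / 4) ^ m := by norm_num [mul_comm]
  have hcast : (#{ρ : Equiv.Perm (Fin n) | #(goodBlocks ρ) ≤ T} : ℝ) * 2 ^ m
      = F * Fintype.card (Equiv.Perm (Fin n)) := by exact_mod_cast huniform
  calc (#{ρ : Equiv.Perm (Fin n) | #(goodBlocks ρ) ≤ T} : ℝ)
      = F * Fintype.card (Equiv.Perm (Fin n)) / 2 ^ m := by rw [← hcast]; field_simp
    _ ≤ 4 ^ T * (5 / 4) ^ m * Fintype.card (Equiv.Perm (Fin n)) / 2 ^ m := by gcongr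
    _ = 4 ^ T * (5 / 8) ^ m * Fintype.card (Equiv.Perm (Fin n)) := by
        rw [show (5 / 8 : ℝ) ^ m = (5 / 4) ^ m / 2 ^ m by rw [← div_pow]; norm_num]
        ring
    _ ≤ Real.exp (-(1 / 100) * n) * Fintype.card (Equiv.Perm (Fin n)) := by
        gcongr
        exact (four_pow_mul_five_div_eight_pow_le hn).trans hexp

end PathMinNeighbor

open PathMinNeighbor

/-- There are `c > 0` and `n₀` such that for all `n ≥ n₀` the
following holds.  Let `P_n` be the path graph on `n` vertices and, for a bijection
`ρ` of the vertex set (a uniformly random priority assignment), let `f ρ v` be the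
neighbor of `v` minimizing `ρ`.  Then with probability at least `1 − e^{−c·n}` the
undirected functional graph `H` of `f ρ` (edge set `{{v, f ρ v}}`) has at least `n/26`
connected components (hence TreeContraction needs `Ω(log n)` phases on a path w.h.p.). -/
theorem stmt14 :
    ∃ c : ℝ, 0 < c ∧ ∃ n₀ : ℕ, ∀ n : ℕ, n₀ ≤ n →
      ∀ f : Equiv.Perm (Fin n) → Fin n → Fin n,
        (∀ (ρ : Equiv.Perm (Fin n)) (v : Fin n),
          (pathGraph n).Adj v (f ρ v) ∧
            ∀ u : Fin n, (pathGraph n).Adj v u → ρ (f ρ v) ≤ ρ u) →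
        1 - Real.exp (-c * n) ≤
          (Nat.card {ρ : Equiv.Perm (Fin n) //
              (n : ℝ) / 26 ≤
                (Nat.card (SimpleGraph.fromRel
                  fun u w => f ρ u = w).ConnectedComponent : ℝ)} : ℝ) /
            (Fintype.card (Equiv.Perm (Fin n)) : ℝ) := by
  classical
  refine ⟨1 / 100, by norm_num, 312, fun n hn f hf => ?_⟩
  set P : Equiv.Perm (Fin n) → Prop := fun ρ =>
    (n : ℝ) / 26 ≤ (Nat.card (fromRel fun u w => f ρ u = w).ConnectedComponent : ℝ)
  have hgood : ∀ ρ, ¬ P ρ → #(goodBlocks ρ) ≤ n / 26 := by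
    intro ρ hρ
    contrapose! hρ
    have := card_goodBlocks_le_card_connectedComponent (hf ρ)
    simp only [P, div_le_iff₀ (by norm_num : (0 : ℝ) < 26)]
    exact_mod_cast (by omega : n ≤ Nat.card _ * 26)
  have hsplit : (#{ρ | P ρ} : ℝ) + #{ρ | ¬ P ρ} = Fintype.card (Equiv.Perm (Fin n)) := by
    exact_mod_cast card_filter_add_card_filter_not (s := univ) P
  have hnotP : (#{ρ | ¬ P ρ} : ℝ) ≤ #{ρ : Equiv.Perm (Fin n) | #(goodBlocks ρ) ≤ n / 26} := by
    exact_mod_cast card_le_card (monotone_filter_right _ fun ρ _ => hgood ρ)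
  have hbad := card_filter_card_goodBlocks_le hn
  rw [Nat.card_eq_fintype_card, Fintype.card_subtype,
    le_div_iff₀ (by exact_mod_cast Fintype.card_pos)]
  linarith
end
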